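/- In a many-to-one stable matching market, the number of distinct nonempty sets E_i^1, …, E_i^{k_i} of students that a fixed institution i can be assigned across all stable matchings is at most the number of students acceptable to i, i.e., k_i ≤ |E(i)|. -/

import Mathlib

/-
The least preferred student of a nonempty stable set determines the set, so the map sending a
stable set of `i` to (the rank of) its worst student is injective and lands in the acceptable
edges of `i`.

Why the worst student `s` determines the set: let `M`, `M'` be stable with `s` worst in both
`M(i)` and `M'(i)`, and suppose `t₀ ∈ M(i) \ M'(i)`. Call a student an improver if she strictly
prefers her `M'`-institution `j` to her `M`-assignment. By stability of `M`, such a `j` is full in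
`M` and likes each of its `M`-students better than the improver; by stability of `M'`, every
student `j` loses is then an improver herself, and `j` loses at least as many students as it gains
improvers. Double counting forces equality: every improver sits, in `M`, at an institution that
gains an improver. Now `t₀` is an improver (`i` prefers her to `s ∈ M'(i)`), so `i` gains an
improver `t'`; then `i` prefers `s` to `t'`, but `s` is worst in `M'(i)`, so `t' = s ∈ M(i)`,
which is absurd.
-/

open Finset

/-- A (many-to-one) matching market: acceptability edges, capacities, and
rank functions encoding strict preferences (lower rank = more preferred). -/
structure Market (S I : Type*) where
  E : Finset (S × I)
  q : I → ℕ
  prefS : S → I → ℕ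
  prefI : I → S → ℕ

variable {S I : Type*} [DecidableEq S] [DecidableEq I]

/-- The edges of `M` incident to institution `i`. -/
def edgesOf (M : Finset (S × I)) (i : I) : Finset (S × I) :=
  M.filter (fun e => e.2 = i)

/-- The set of students assigned to institution `i` under `M`. -/
def assigned (M : Finset (S × I)) (i : I) : Finset S :=
  (edgesOf M i).image Prod.fst

/-- `M` is a matching: it uses acceptable edges, each student is matched at most
once, and each institution `i` is matched to at most `q i` students. -/
def IsMatching (mkt : Market S I) (M : Finset (S × I)) : Prop :=
  M ⊆ mkt.E ∧ (∀ s : S, (M.filter (fun e => e.1 = s)).card ≤ 1) ∧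
    ∀ i : I, (edgesOf M i).card ≤ mkt.q i

/-- `(s, i)` blocks `M`: it is an acceptable non-matching pair, `s` strictly prefers
`i` to her assignment (being unmatched is worst), and `i` has a free seat or a
student it likes strictly less than `s`. -/
def Blocks (mkt : Market S I) (M : Finset (S × I)) (s : S) (i : I) : Prop :=
  (s, i) ∈ mkt.E ∧ (s, i) ∉ M ∧
    (∀ i' : I, (s, i') ∈ M → mkt.prefS s i < mkt.prefS s i') ∧
    ((edgesOf M i).card < mkt.q i ∨ ∃ s' ∈ assigned M i, mkt.prefI i s < mkt.prefI i s')

/-- A stable matching admits no blocking pair. -/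
def IsStable (mkt : Market S I) (M : Finset (S × I)) : Prop :=
  IsMatching mkt M ∧ ∀ s i, ¬ Blocks mkt M s i

section Improvers

variable {mkt : Market S I} {M M' : Finset (S × I)} {s t u w : S} {i j : I}

lemma mem_assigned : s ∈ assigned M i ↔ (s, i) ∈ M := by
  simp [assigned, edgesOf]

lemma card_assigned (M : Finset (S × I)) (i : I) :
    (assigned M i).card = (edgesOf M i).card :=
  card_image_of_injOn fun _ he _ he' h =>
    Prod.ext h (((mem_filter.mp he).2).trans (mem_filter.mp he').2.symm)

lemma IsMatching.eq_of_mem (hM : IsMatching mkt M) (hi : (s, i) ∈ M) (hj : (s, j) ∈ M) :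
    i = j :=
  congrArg Prod.snd (card_le_one.mp (hM.2.1 s) (s, i) (by simp [hi]) (s, j) (by simp [hj]))

lemma IsMatching.pairwiseDisjoint_assigned (hM : IsMatching mkt M) (J : Set I) :
    J.PairwiseDisjoint (assigned M) :=
  fun _ _ _ _ hne => disjoint_left.mpr fun _ hu hu' =>
    hne (hM.eq_of_mem (mem_assigned.mp hu) (mem_assigned.mp hu'))

lemma IsMatching.card_assigned_le (hM : IsMatching mkt M) (i : I) :
    (assigned M i).card ≤ mkt.q i :=
  card_assigned M i ▸ hM.2.2 i

/-- Vacuous when `t` is unmatched in `M`: being unmatched is worst. -/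
def StrictlyPrefers (mkt : Market S I) (M : Finset (S × I)) (t : S) (j : I) : Prop :=
  ∀ j', (t, j') ∈ M → mkt.prefS t j < mkt.prefS t j'

lemma IsStable.full_of_strictlyPrefers (hM : IsStable mkt M) (hE : (t, j) ∈ mkt.E)
    (ht : StrictlyPrefers mkt M t j) : mkt.q j ≤ (assigned M j).card := by
  rw [card_assigned]
  by_contra! h
  exact hM.2 t j ⟨hE, (lt_irrefl _ <| ht j ·), ht, Or.inl h⟩

lemma IsStable.prefI_le_of_strictlyPrefers (hM : IsStable mkt M) (hE : (t, j) ∈ mkt.E)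
    (ht : StrictlyPrefers mkt M t j) (hu : u ∈ assigned M j) :
    mkt.prefI j u ≤ mkt.prefI j t := by
  by_contra! h
  exact hM.2 t j ⟨hE, (lt_irrefl _ <| ht j ·), ht, Or.inr ⟨u, hu, h⟩⟩

open Classical in
noncomputable def improvers (mkt : Market S I) (M M' : Finset (S × I)) (j : I) : Finset S :=
  (assigned M' j).filter (StrictlyPrefers mkt M · j)

lemma mem_improvers : t ∈ improvers mkt M M' j ↔ (t, j) ∈ M' ∧ StrictlyPrefers mkt M t j := by
  simp [improvers, mem_assigned]

lemma improvers_subset_sdiff : improvers mkt M M' j ⊆ assigned M' j \ assigned M j :=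
  fun _ ht => mem_sdiff.mpr ⟨mem_assigned.mpr (mem_improvers.mp ht).1,
    fun h => lt_irrefl _ ((mem_improvers.mp ht).2 j (mem_assigned.mp h))⟩

lemma IsStable.exists_mem_improvers (hstrictS : ∀ s, Function.Injective (mkt.prefS s))
    (hM : IsMatching mkt M) (hM' : IsStable mkt M') (hu : (u, j) ∈ M) (hu' : (u, j) ∉ M')
    (hw : w ∈ assigned M' j) (hlt : mkt.prefI j u < mkt.prefI j w) :
    ∃ j', u ∈ improvers mkt M M' j' := by
  by_contra! h
  refine hM'.2 u j ⟨hM.1 hu, hu', fun j' hj' => ?_, Or.inr ⟨w, hw, hlt⟩⟩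
  have hnot : ¬ StrictlyPrefers mkt M u j' := fun hp => h j' (mem_improvers.mpr ⟨hj', hp⟩)
  obtain ⟨j'', hj''M, hle⟩ : ∃ j'', (u, j'') ∈ M ∧ mkt.prefS u j'' ≤ mkt.prefS u j' := by
    simpa [StrictlyPrefers] using hnot
  obtain rfl := hM.eq_of_mem hj''M hu
  exact lt_of_le_of_ne hle fun he => hu' (hstrictS u he ▸ hj')

lemma IsStable.exists_mem_improvers_of_mem_sdiff
    (hstrictS : ∀ s, Function.Injective (mkt.prefS s))
    (hstrictI : ∀ i, Function.Injective (mkt.prefI i)) (hM : IsStable mkt M)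
    (hM' : IsStable mkt M') (ht : t ∈ improvers mkt M M' j)
    (hu : u ∈ assigned M j \ assigned M' j) : ∃ j', u ∈ improvers mkt M M' j' := by
  obtain ⟨huM, huM'⟩ := mem_sdiff.mp hu
  obtain ⟨htM', htM⟩ := mem_sdiff.mp (improvers_subset_sdiff ht)
  obtain ⟨htj, htp⟩ := mem_improvers.mp ht
  have hle := hM.prefI_le_of_strictlyPrefers (hM'.1.1 htj) htp huM
  refine hM'.exists_mem_improvers hstrictS hM.1 (mem_assigned.mp huM)
    (fun h => huM' (mem_assigned.mpr h)) htM' (lt_of_le_of_ne hle fun he => ?_)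
  exact htM (hstrictI j he ▸ huM)

/-- An institution that gains an improver is full in `M`. -/
lemma IsStable.card_improvers_le (hM : IsStable mkt M) (hM' : IsMatching mkt M')
    (hne : (improvers mkt M M' j).Nonempty) :
    (improvers mkt M M' j).card ≤ (assigned M j \ assigned M' j).card := by
  obtain ⟨t, ht⟩ := hne
  obtain ⟨htj, htp⟩ := mem_improvers.mp ht
  have hcard : (assigned M' j).card ≤ (assigned M j).card :=
    (hM'.card_assigned_le j).trans (hM.full_of_strictlyPrefers (hM'.1 htj) htp)
  exact (card_le_card improvers_subset_sdiff).trans (card_sdiff_le_card_sdiff_iff.mpr hcard)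

/-- The students lost by institutions gaining improvers are all improvers, and there are at least
as many of them as there are improvers. -/
lemma IsStable.exists_improvers_nonempty_of_mem_improvers
    (hstrictS : ∀ s, Function.Injective (mkt.prefS s))
    (hstrictI : ∀ i, Function.Injective (mkt.prefI i)) (hM : IsStable mkt M)
    (hM' : IsStable mkt M') (ht : t ∈ improvers mkt M M' i) :
    ∃ j, (improvers mkt M M' j).Nonempty ∧ (t, j) ∈ M := by
  set J := (M'.image Prod.snd).filter fun j => (improvers mkt M M' j).Nonempty
  have hJ : ∀ {j u}, u ∈ improvers mkt M M' j → j ∈ J := fun hu =>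
    mem_filter.mpr ⟨mem_image.mpr ⟨_, (mem_improvers.mp hu).1, rfl⟩, _, hu⟩
  set gained := J.biUnion (improvers mkt M M')
  set lost := J.biUnion fun j => assigned M j \ assigned M' j
  have hsub : lost ⊆ gained := by
    intro u hu
    obtain ⟨j, hj, hu⟩ := mem_biUnion.mp hu
    obtain ⟨t, ht⟩ := (mem_filter.mp hj).2
    obtain ⟨j', hj'⟩ := hM.exists_mem_improvers_of_mem_sdiff hstrictS hstrictI hM' ht hu
    exact mem_biUnion.mpr ⟨j', hJ hj', hj'⟩
  have hcard : gained.card ≤ lost.card := calc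
    gained.card ≤ ∑ j ∈ J, (improvers mkt M M' j).card := card_biUnion_le
    _ ≤ ∑ j ∈ J, (assigned M j \ assigned M' j).card :=
      sum_le_sum fun j hj => hM.card_improvers_le hM'.1 (mem_filter.mp hj).2
    _ = lost.card :=
      (card_biUnion ((hM.1.pairwiseDisjoint_assigned _).mono fun _ => sdiff_subset)).symm
  have htlost : t ∈ lost := by
    rw [eq_of_subset_of_card_le hsub hcard]
    exact mem_biUnion.mpr ⟨i, hJ ht, ht⟩
  obtain ⟨j, hj, htj⟩ := mem_biUnion.mp htlost
  exact ⟨j, (mem_filter.mp hj).2, mem_assigned.mp (mem_sdiff.mp htj).1⟩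

lemma IsStable.assigned_subset_of_worst_mem (hstrictS : ∀ s, Function.Injective (mkt.prefS s))
    (hstrictI : ∀ i, Function.Injective (mkt.prefI i)) (hM : IsStable mkt M)
    (hM' : IsStable mkt M') (hs : s ∈ assigned M i) (hs' : s ∈ assigned M' i)
    (hworst : ∀ u ∈ assigned M i, mkt.prefI i u ≤ mkt.prefI i s)
    (hworst' : ∀ u ∈ assigned M' i, mkt.prefI i u ≤ mkt.prefI i s) :
    assigned M i ⊆ assigned M' i := by
  intro t ht
  by_contra ht'
  have hlt : mkt.prefI i t < mkt.prefI i s :=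
    lt_of_le_of_ne (hworst t ht) fun he => ht' (hstrictI i he ▸ hs')
  obtain ⟨j₀, hj₀⟩ := hM'.exists_mem_improvers hstrictS hM.1 (mem_assigned.mp ht)
    (fun h => ht' (mem_assigned.mpr h)) hs' hlt
  obtain ⟨j, ⟨t', ht'j⟩, htj⟩ :=
    hM.exists_improvers_nonempty_of_mem_improvers hstrictS hstrictI hM' hj₀
  obtain rfl := hM.1.eq_of_mem htj (mem_assigned.mp ht)
  obtain ⟨ht'M', ht'M⟩ := mem_sdiff.mp (improvers_subset_sdiff ht'j)
  obtain ⟨ht'E, ht'p⟩ := mem_improvers.mp ht'j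
  have hle := hM.prefI_le_of_strictlyPrefers (hM'.1.1 ht'E) ht'p hs
  exact ht'M (hstrictI j (le_antisymm (hworst' t' ht'M') hle) ▸ hs)

lemma IsStable.assigned_eq_of_sup_eq (hstrictS : ∀ s, Function.Injective (mkt.prefS s))
    (hstrictI : ∀ i, Function.Injective (mkt.prefI i)) (hM : IsStable mkt M)
    (hM' : IsStable mkt M') (hne : (assigned M i).Nonempty) (hne' : (assigned M' i).Nonempty)
    (h : (assigned M i).sup (mkt.prefI i) = (assigned M' i).sup (mkt.prefI i)) :
    assigned M i = assigned M' i := by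
  obtain ⟨s, hs, hsup⟩ := exists_mem_eq_sup _ hne (mkt.prefI i)
  obtain ⟨s', hs', hsup'⟩ := exists_mem_eq_sup _ hne' (mkt.prefI i)
  obtain rfl : s = s' := hstrictI i (hsup.symm.trans (h.trans hsup'))
  have hworst : ∀ u ∈ assigned M i, mkt.prefI i u ≤ mkt.prefI i s :=
    fun u hu => hsup ▸ le_sup hu
  have hworst' : ∀ u ∈ assigned M' i, mkt.prefI i u ≤ mkt.prefI i s :=
    fun u hu => hsup' ▸ le_sup hu
  exact (hM.assigned_subset_of_worst_mem hstrictS hstrictI hM' hs hs' hworst hworst').antisymm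
    (hM'.assigned_subset_of_worst_mem hstrictS hstrictI hM hs' hs hworst' hworst)

end Improvers

theorem stmt5_general (mkt : Market S I)
    (hstrictS : ∀ s, Function.Injective (mkt.prefS s))
    (hstrictI : ∀ i, Function.Injective (mkt.prefI i))
    (i : I) :
    {F : Finset S | F.Nonempty ∧ ∃ M, IsStable mkt M ∧ assigned M i = F}.ncard ≤
      (mkt.E.filter (fun e => e.2 = i)).card := by
  calc _ ≤ ((mkt.E.filter (fun e => e.2 = i)).image fun e => mkt.prefI i e.1).card := by
        rw [← Set.ncard_coe_finset]
        refine Set.ncard_le_ncard_of_injOn (fun F => F.sup (mkt.prefI i)) ?_ ?_ (finite_toSet _)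
        · rintro _ ⟨hF, M, hM, rfl⟩
          obtain ⟨s, hs, hsup⟩ := exists_mem_eq_sup _ hF (mkt.prefI i)
          exact mem_image.mpr ⟨(s, i), mem_filter.mpr ⟨hM.1.1 (mem_assigned.mp hs), rfl⟩, hsup.symm⟩
        · rintro _ ⟨hF, M, hM, rfl⟩ _ ⟨hF', M', hM', rfl⟩ h
          exact hM.assigned_eq_of_sup_eq hstrictS hstrictI hM' hF hF' h
    _ ≤ _ := card_image_le

/-- The number of distinct nonempty stable sets of an institution i is at most
the number of acceptable students of i. -/
theorem stmt5 [Fintype S] [Fintype I] (mkt : Market S I)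
    (hstrictS : ∀ s, Function.Injective (mkt.prefS s))
    (hstrictI : ∀ i, Function.Injective (mkt.prefI i))
    (i : I) :
    {F : Finset S | F.Nonempty ∧ ∃ M, IsStable mkt M ∧ assigned M i = F}.ncard ≤
      (mkt.E.filter (fun e => e.2 = i)).card :=
  stmt5_general mkt hstrictS hstrictI i
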